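/- For a = (a₁,a₂) and b = (b₁,b₂) in G₂(n), the product a·b⁻¹ lies in ε(O(n)) = {(ξ,0) : ξᵀξ = I} if and only if F(a) = F(b), where F = (F₁,F₂) with F₁(a) = a₁ᵀa₁ and F₂(a)^i_{jk} = Σ_s (a₁⁻¹)^i_s (a₂)^s_{jk}. Equivalently: a·b⁻¹ ∈ ε(O(n)) ⟺ a₁ᵀa₁ = b₁ᵀb₁ and a₁⁻¹a₂ = b₁⁻¹b₂. In particular the fibers of F are exactly the right cosets of ε(O(n)) in G₂(n). -/

import Mathlib

open Matrix BigOperators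

noncomputable section

/-- n×n real matrices (first component of a 2-jet). -/
abbrev Mat (n : ℕ) := Matrix (Fin n) (Fin n) ℝ

/-- Real arrays a^i_{jk} (second component of a 2-jet). -/
abbrev Arr (n : ℕ) := Fin n → Fin n → Fin n → ℝ

/-- An element of the model of G₂(n): a pair (a₁, a₂). -/
abbrev Jet (n : ℕ) := Mat n × Arr n

/-- Symmetry of an array in its two lower indices. -/
def SymArr {n : ℕ} (c : Arr n) : Prop := ∀ i j k, c i j k = c i k j

/-- Membership in G₂(n): invertible first component, symmetric second component. -/
def IsJet {n : ℕ} (a : Jet n) : Prop := IsUnit a.1 ∧ SymArr a.2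

/-- The multiplication of G₂(n):
`(a·b)₁ = a₁ b₁`, `(a·b)₂^i_{jk} = Σ_s a₁^i_s b₂^s_{jk} + Σ_{s,t} a₂^i_{st} b₁^s_j b₁^t_k`. -/
def jmul {n : ℕ} (a b : Jet n) : Jet n :=
  (a.1 * b.1,
   fun i j k => (∑ s, a.1 i s * b.2 s j k) + ∑ s, ∑ t, a.2 i s t * b.1 s j * b.1 t k)

/-- The identity candidate (I, 0). -/
def jone (n : ℕ) : Jet n := ((1 : Mat n), fun _ _ _ => 0)

/-- The inverse in G₂(n). -/
def jinv {n : ℕ} (a : Jet n) : Jet n :=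
  (a.1⁻¹,
   fun i j k => -∑ s, ∑ t, ∑ r, a.1⁻¹ i s * a.2 s t r * a.1⁻¹ t j * a.1⁻¹ r k)

/-- F₂(a)^i_{jk} = Σ_s (a₁⁻¹)^i_s (a₂)^s_{jk}. -/
def F₂ {n : ℕ} (a : Jet n) : Arr n := fun i j k => ∑ s, a.1⁻¹ i s * a.2 s j k

/-! The first component of `a·b⁻¹` is `a₁b₁⁻¹`, which is orthogonal iff `a₁ᵀa₁ = b₁ᵀb₁`.
Its second component is the array `a₂ - a₁F₂(b)` with both lower indices transformed by `b₁⁻¹`;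
since `b₁⁻¹` is invertible this vanishes iff `a₂ = a₁F₂(b)`, i.e. iff `F₂(a) = F₂(b)`. -/

namespace Matrix

variable {m R : Type*} [Fintype m] [DecidableEq m] [CommRing R]

theorem transpose_mul_mul_inj {P X Y : Matrix m m R} (hP : IsUnit P) :
    Pᵀ * X * P = Pᵀ * Y * P ↔ X = Y := by
  rw [hP.mul_left_inj, ((isUnit_transpose P).mpr hP).mul_right_inj]

theorem transpose_mul_self_mul_inv_eq_one_iff {A B : Matrix m m R} (hB : IsUnit B) :
    (A * B⁻¹)ᵀ * (A * B⁻¹) = 1 ↔ Aᵀ * A = Bᵀ * B := by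
  have hBd : IsUnit B.det := (isUnit_iff_isUnit_det B).mp hB
  have hB₁ : B⁻¹ᵀ * (Bᵀ * B) * B⁻¹ = 1 := by
    rw [← Matrix.mul_assoc, ← transpose_mul, mul_nonsing_inv _ hBd, transpose_one,
      Matrix.one_mul, mul_nonsing_inv _ hBd]
  rw [← hB₁, transpose_mul, Matrix.mul_assoc, ← Matrix.mul_assoc Aᵀ, ← Matrix.mul_assoc,
    transpose_mul_mul_inj (isUnit_nonsing_inv_iff.mpr hB)]

end Matrix

namespace Arr

variable {n : ℕ}

/-- `(M c)^i_{jk} = Σ_s M^i_s c^s_{jk}`. -/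
def mulLeft (M : Mat n) (c : Arr n) : Arr n := fun i => ∑ s, M i s • c s

/-- `(c P)^i_{jk} = Σ_{s,t} c^i_{st} P^s_j P^t_k`, computed slice by slice as `Pᵀ cⁱ P`. -/
def pullback (c : Arr n) (P : Mat n) : Arr n := fun i => Pᵀ * of (c i) * P

theorem pullback_apply (c : Arr n) (P : Mat n) (i j k : Fin n) :
    pullback c P i j k = ∑ s, ∑ t, c i s t * P s j * P t k := by
  simp only [pullback, mul_apply, transpose_apply, of_apply, Finset.sum_mul]
  rw [Finset.sum_comm]
  exact Finset.sum_congr rfl fun s _ => Finset.sum_congr rfl fun t _ => by ring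

theorem mulLeft_mulLeft (M N : Mat n) (c : Arr n) :
    mulLeft M (mulLeft N c) = mulLeft (M * N) c := by
  funext i
  simp only [mulLeft, Finset.smul_sum, smul_smul, mul_apply, Finset.sum_smul]
  exact Finset.sum_comm

theorem mulLeft_one (c : Arr n) : mulLeft 1 c = c := by
  funext i
  simp [mulLeft, one_apply]

theorem mulLeft_neg (M : Mat n) (c : Arr n) : mulLeft M (-c) = -mulLeft M c := by
  funext i
  simp [mulLeft]

theorem mulLeft_pullback (M P : Mat n) (c : Arr n) :
    mulLeft M (pullback c P) = pullback (mulLeft M c) P := by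
  funext i
  change _ = Pᵀ * ofLinearEquiv ℝ (∑ s, M i s • c s) * P
  simp only [map_sum, map_smul, Matrix.mul_sum, Matrix.sum_mul, Matrix.mul_smul,
    Matrix.smul_mul, coe_ofLinearEquiv]
  rfl

theorem pullback_sub (c d : Arr n) (P : Mat n) :
    pullback (c - d) P = pullback c P - pullback d P := by
  funext i
  rw [Pi.sub_apply, pullback, pullback, pullback, Pi.sub_apply, ← of_sub_of, Matrix.mul_sub,
    Matrix.sub_mul]
  rfl

theorem pullback_eq_zero_iff {c : Arr n} {P : Mat n} (hP : IsUnit P) :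
    pullback c P = 0 ↔ c = 0 := by
  have hslice (i : Fin n) : Pᵀ * of (c i) * P = 0 ↔ c i = 0 := by
    rw [← Matrix.zero_mul P, ← Matrix.mul_zero Pᵀ, transpose_mul_mul_inj hP]
    rfl
  rw [funext_iff, funext_iff]
  exact forall_congr' hslice

theorem eq_mulLeft_iff {M : Mat n} {c d : Arr n} (hM : IsUnit M) :
    c = mulLeft M d ↔ mulLeft M⁻¹ c = d := by
  have hMd : IsUnit M.det := (isUnit_iff_isUnit_det M).mp hM
  constructor
  · rintro rfl
    rw [mulLeft_mulLeft, nonsing_inv_mul _ hMd, mulLeft_one]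
  · rintro rfl
    rw [mulLeft_mulLeft, mul_nonsing_inv _ hMd, mulLeft_one]

end Arr

open Arr

theorem F₂_eq_mulLeft {n : ℕ} (a : Jet n) : F₂ a = mulLeft a.1⁻¹ a.2 := by
  funext i j k
  simp [F₂, mulLeft, Finset.sum_apply]

theorem jmul_snd {n : ℕ} (a b : Jet n) :
    (jmul a b).2 = mulLeft a.1 b.2 + pullback a.2 b.1 := by
  funext i j k
  simp [jmul, pullback_apply, mulLeft, Finset.sum_apply]

theorem jinv_snd {n : ℕ} (a : Jet n) : (jinv a).2 = -pullback (F₂ a) a.1⁻¹ := by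
  funext i j k
  simp only [jinv, pullback_apply, F₂, Pi.neg_apply, Finset.sum_mul]
  congr 1
  exact Finset.sum_comm.trans (Finset.sum_congr rfl fun _ _ => Finset.sum_comm)

theorem jmul_jinv_snd {n : ℕ} (a b : Jet n) :
    (jmul a (jinv b)).2 = pullback (a.2 - mulLeft a.1 (F₂ b)) b.1⁻¹ := by
  rw [jmul_snd, jinv_snd, mulLeft_neg, mulLeft_pullback, pullback_sub]
  exact neg_add_eq_sub _ _

theorem g2_right_cosets_of_epsOn_general (n : ℕ) (a b : Jet n)
    (ha : IsJet a) (hb : IsJet b) :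
    (∃ ξ : Mat n, ξᵀ * ξ = 1 ∧ jmul a (jinv b) = (ξ, fun _ _ _ => 0)) ↔
      (a.1ᵀ * a.1 = b.1ᵀ * b.1 ∧ F₂ a = F₂ b) := by
  have hb₁ : IsUnit b.1⁻¹ := isUnit_nonsing_inv_iff.mpr hb.1
  calc (∃ ξ : Mat n, ξᵀ * ξ = 1 ∧ jmul a (jinv b) = (ξ, fun _ _ _ => 0))
      ↔ (a.1 * b.1⁻¹)ᵀ * (a.1 * b.1⁻¹) = 1 ∧ (jmul a (jinv b)).2 = 0 := by
        simp only [Prod.ext_iff]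
        exact ⟨fun ⟨ξ, hξ, h₁, h₂⟩ => ⟨by subst h₁; exact hξ, h₂⟩,
          fun ⟨hξ, h₂⟩ => ⟨_, hξ, rfl, h₂⟩⟩
    _ ↔ a.1ᵀ * a.1 = b.1ᵀ * b.1 ∧ F₂ a = F₂ b := by
        rw [transpose_mul_self_mul_inv_eq_one_iff hb.1, jmul_jinv_snd,
          pullback_eq_zero_iff hb₁, sub_eq_zero, eq_mulLeft_iff ha.1, ← F₂_eq_mulLeft]

/-- a·b⁻¹ ∈ ε(O(n)) = {(ξ,0) : ξᵀξ = I} iff F(a) = F(b), i.e. iff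
a₁ᵀa₁ = b₁ᵀb₁ and a₁⁻¹a₂ = b₁⁻¹b₂; so the fibers of F = (F₁,F₂) are exactly the
right cosets of ε(O(n)). -/
theorem g2_right_cosets_of_epsOn (n : ℕ) (hn : 1 ≤ n) (a b : Jet n)
    (ha : IsJet a) (hb : IsJet b) :
    (∃ ξ : Mat n, ξᵀ * ξ = 1 ∧ jmul a (jinv b) = (ξ, fun _ _ _ => 0)) ↔
      (a.1ᵀ * a.1 = b.1ᵀ * b.1 ∧ F₂ a = F₂ b) :=
  g2_right_cosets_of_epsOn_general n a b ha hb
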